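/- arXiv:1708.04480 — 2 statements merged into one kernel-verified Lean document; each statement's English description precedes it below -/
import Mathlib

section
/- Let a, b, c ∈ ℂ be nonzero and n ∈ ℂ with n ≠ 0. Suppose x, y, m, r, s ∈ ℂ satisfy: a·x + b·y⁴ + c·x·y = 0, y + m + n·x = 0, (4·b·y³ + c·x)·n - (a + c·y) = 0, a·r + b·s⁴ + c·r·s = 0, s + m + n·r = 0, (4·b·s³ + c·r)·n - (a + c·s) = 0, and (x, y) ≠ (r, s). Then n = c³/(4·a²·b), m = -a/c, y = -s, c²·s² = 2·a², c⁴·r = 4·a³·b - 4·a²·b·c·s, and c⁴·x = 4·a³·b + 4·a²·b·c·s. -/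
/-- The saturation computation in Theorem 4.1: the system of tangency equations at two
distinct points determines the bitangent line uniquely. -/
theorem stmt5 (a b c n : ℂ) (ha : a ≠ 0) (hb : b ≠ 0) (hc : c ≠ 0) (hn : n ≠ 0)
    (x y m r s : ℂ)
    (h1 : a * x + b * y ^ 4 + c * x * y = 0)
    (h2 : y + m + n * x = 0)
    (h3 : (4 * b * y ^ 3 + c * x) * n - (a + c * y) = 0)
    (h4 : a * r + b * s ^ 4 + c * r * s = 0)
    (h5 : s + m + n * r = 0)
    (h6 : (4 * b * s ^ 3 + c * r) * n - (a + c * s) = 0)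
    (hne : (x, y) ≠ (r, s)) :
    n = c ^ 3 / (4 * a ^ 2 * b) ∧ m = -a / c ∧ y = -s ∧
    c ^ 2 * s ^ 2 = 2 * a ^ 2 ∧
    c ^ 4 * r = 4 * a ^ 3 * b - 4 * a ^ 2 * b * c * s ∧
    c ^ 4 * x = 4 * a ^ 3 * b + 4 * a ^ 2 * b * c * s := by
  -- basic nonvanishing facts
  have hy0 : y ≠ 0 := by
    intro h
    subst h
    have hx : x = 0 := by
      rcases mul_eq_zero.mp (show a * x = 0 by linear_combination h1) with h' | h'
      · exact absurd h' ha
      · exact h'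
    subst hx
    exact ha (by linear_combination -h3)
  have hs0 : s ≠ 0 := by
    intro h
    subst h
    have hr : r = 0 := by
      rcases mul_eq_zero.mp (show a * r = 0 by linear_combination h4) with h' | h'
      · exact absurd h' ha
      · exact h'
    subst hr
    exact ha (by linear_combination -h6)
  have hacy : a + c * y ≠ 0 := by
    intro h
    have hy4 : b * y ^ 4 = 0 := by linear_combination h1 - x * h
    rcases mul_eq_zero.mp hy4 with h' | h'
    · exact hb h'
    · exact hy0 (pow_eq_zero_iff (by norm_num : (4:ℕ) ≠ 0) |>.mp h')
  have hacs : a + c * s ≠ 0 := by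
    intro h
    have hs4 : b * s ^ 4 = 0 := by linear_combination h4 - r * h
    rcases mul_eq_zero.mp hs4 with h' | h'
    · exact hb h'
    · exact hs0 (pow_eq_zero_iff (by norm_num : (4:ℕ) ≠ 0) |>.mp h')
  have hys : y ≠ s := by
    intro h
    subst h
    have hxr : x = r := by
      have h' : n * (x - r) = 0 := by linear_combination h2 - h5
      rcases mul_eq_zero.mp h' with h'' | h''
      · exact absurd h'' hn
      · exact sub_eq_zero.mp h''
    exact hne (by rw [hxr])
  have hysne : y - s ≠ 0 := sub_ne_zero.mpr hys
  -- tangency polynomial at each point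
  have hQy : 3*n*b*c*y^4 + 4*n*a*b*y^3 - c^2*y^2 - 2*a*c*y - a^2 = 0 := by
    linear_combination (a + c*y) * h3 - n*c*h1
  have hQs : 3*n*b*c*s^4 + 4*n*a*b*s^3 - c^2*s^2 - 2*a*c*s - a^2 = 0 := by
    linear_combination (a + c*s) * h6 - n*c*h4
  -- divided differences
  have hA0 : (y - s) * (3*n*b*c*(y^3 + y^2*s + y*s^2 + s^3) + 4*n*a*b*(y^2 + y*s + s^2)
      - c^2*(y + s) - 2*a*c) = 0 := by linear_combination hQy - hQs
  have hA : 3*n*b*c*(y^3 + y^2*s + y*s^2 + s^3) + 4*n*a*b*(y^2 + y*s + s^2)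
      - c^2*(y + s) - 2*a*c = 0 := by
    rcases mul_eq_zero.mp hA0 with h' | h'
    · exact absurd h' hysne
    · exact h'
  have hL0 : (y - s) * ((a + c*y) * (a + c*s)
      - n*b*(a*(y+s)*(y^2+s^2) + c*y*s*(y^2 + y*s + s^2))) = 0 := by
    linear_combination (a + c*y)*(a + c*s)*(h2 - h5) - n*(a + c*s)*h1 + n*(a + c*y)*h4
  have hL : (a + c*y) * (a + c*s)
      - n*b*(a*(y+s)*(y^2+s^2) + c*y*s*(y^2 + y*s + s^2)) = 0 := by
    rcases mul_eq_zero.mp hL0 with h' | h'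
    · exact absurd h' hysne
    · exact h'
  have hB : 3*n*b*c*(y*s)*((y*s) - (y+s)^2) - 4*n*a*b*(y+s)*(y*s) + c^2*(y*s) - a^2 = 0 := by
    linear_combination (1/2 : ℂ) * hQy + (1/2 : ℂ) * hQs - ((y+s)/2) * hA
  -- the key elimination: y + s = 0
  have hu0 : 2*c*(y+s) * ((y-s)^2 * ((a + c*y) * (a + c*s))) = 0 := by
    linear_combination
      (3*c*(y+s)*((y+s)^2 - 2*(y*s)) + 4*a*((y+s)^2 - y*s)) * hL
      + ((a*(y+s)*((y+s)^2 - 2*(y*s)) + c*(y*s)*((y+s)^2 - y*s))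
          - (3*c*(y*s)*((y*s) - (y+s)^2) - 4*a*(y+s)*(y*s))) * hA
      + (3*c*(y+s)*((y+s)^2 - 2*(y*s)) + 4*a*((y+s)^2 - y*s)) * hB
  have hu : y + s = 0 := by
    rcases mul_eq_zero.mp hu0 with h' | h'
    · rcases mul_eq_zero.mp h' with h'' | h''
      · exact absurd h'' (mul_ne_zero two_ne_zero hc)
      · exact h''
    · exfalso
      rcases mul_eq_zero.mp h' with h'' | h''
      · exact pow_ne_zero 2 hysne h''
      · exact mul_ne_zero hacy hacs h''
  have hsy : s = -y := by linear_combination hu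
  subst hsy
  -- now in the single variable y
  have hnb0 : 2*a * (2*n*b*y^2 - c) = 0 := by linear_combination hA
  have hnb : 2*n*b*y^2 - c = 0 := by
    rcases mul_eq_zero.mp hnb0 with h' | h'
    · exact absurd h' (mul_ne_zero two_ne_zero ha)
    · exact h'
  have hB' : 3*n*b*c*y^4 - c^2*y^2 - a^2 = 0 := by linear_combination hB
  have hcy : c^2*y^2 - 2*a^2 = 0 := by linear_combination 2*hB' - 3*c*y^2*hnb
  refine ⟨?_, ?_, by ring, by linear_combination hcy, ?_, ?_⟩
  · rw [eq_div_iff (by exact mul_ne_zero (mul_ne_zero (by norm_num) (pow_ne_zero 2 ha)) hb)]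
    linear_combination c^2*hnb - 2*n*b*hcy
  · have hcnx0 : (a + c*y) * (c*n*x - (a - c*y)) = 0 := by
      linear_combination c*n*h1 - (c*y^2/2)*hnb + (1/2 : ℂ)*hcy
    have hcnx : c*n*x - (a - c*y) = 0 := by
      rcases mul_eq_zero.mp hcnx0 with h' | h'
      · exact absurd h' hacy
      · exact h'
    rw [eq_div_iff hc]
    linear_combination c*h2 - hcnx
  · have h0 : (a + c*(-y)) * (c^4*r - (4*a^3*b - 4*a^2*b*c*(-y))) = 0 := by
      linear_combination c^4*h4 - b*(c^2*y^2 - 2*a^2)*hcy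
    rcases mul_eq_zero.mp h0 with h' | h'
    · exact absurd h' hacs
    · linear_combination h'
  · have h0 : (a + c*y) * (c^4*x - (4*a^3*b + 4*a^2*b*c*(-y))) = 0 := by
      linear_combination c^4*h1 - b*(c^2*y^2 - 2*a^2)*hcy
    rcases mul_eq_zero.mp h0 with h' | h'
    · exact absurd h' hacy
    · linear_combination h'
end

section
/- Let a, b, c ∈ ℂ be nonzero, let m = a/b, and let k ≥ 2 be an integer. Then the system of equations in (x, y, n) ∈ ℂ* × ℂ × ℂ*: y + m + n·x = 0, a + b·y + c·x·y^k = 0, n·(b + k·c·x·y^(k-1)) - c·y^k = 0 has no solution. -/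
/-- Lemma 4.3 (initial-term computation): the system given by the line, curve and
Wronskian has no solution with `x, n` nonzero when `m = a/b`. -/
theorem stmt9 (a b c : ℂ) (ha : a ≠ 0) (hb : b ≠ 0) (hc : c ≠ 0)
    (m : ℂ) (hm : m = a / b) (k : ℕ) (hk : 2 ≤ k) :
    ¬ ∃ x y n : ℂ, x ≠ 0 ∧ n ≠ 0 ∧
      y + m + n * x = 0 ∧
      a + b * y + c * x * y ^ k = 0 ∧
      n * (b + (k : ℂ) * c * x * y ^ (k - 1)) - c * y ^ k = 0 := by
  rintro ⟨x, y, n, hx, hn, h1, h2, h3⟩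
  have hbm : a = b * m := by rw [hm]; field_simp
  obtain ⟨j, rfl⟩ : ∃ j, k = j + 1 := ⟨k - 1, by omega⟩
  simp only [Nat.add_sub_cancel] at h3
  rw [hbm] at h2
  push_cast at h3
  have key : ((j : ℂ) + 1) * b * (y + m) ^ 2 = 0 := by
    linear_combination x * y * h3 - (((j : ℂ) + 1) * n * x - y) * h2 +
      (b * (y - ((j : ℂ) + 1) * (y + m)) + 2 * ((j : ℂ) * b * (y + m) + b * m)) * h1
  have hjn : ((j : ℂ) + 1) ≠ 0 := Nat.cast_add_one_ne_zero j
  have hym : y + m = 0 := by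
    have h := mul_eq_zero.mp key
    rcases h with h | h
    · rcases mul_eq_zero.mp h with h | h
      · exact absurd h hjn
      · exact absurd h hb
    · exact pow_eq_zero_iff (two_ne_zero) |>.mp h
  have hy : y = -m := eq_neg_of_add_eq_zero_left hym
  subst hy
  have hcx : c * x * (-m) ^ (j + 1) = 0 := by linear_combination h2
  have hm0 : m = 0 := by
    rcases mul_eq_zero.mp hcx with h | h
    · exact absurd (mul_eq_zero.mp h) (by simp [hc, hx])
    · have := pow_eq_zero_iff (Nat.succ_ne_zero j) |>.mp h
      simpa using this
  exact ha (by rw [hbm, hm0, mul_zero])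
end
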